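/- Let X, Y be real functions (scalars) and define, for γ > 0 small enough that the square-root argument is positive, L(γ) = (1 − √(1 − 2γY + 2γ²(Y² − X)))/(2γ), with partial derivatives L_X = ∂L/∂X and L_Y = ∂L/∂Y. Then L satisfies the flow equation ∂L/∂γ = −4(X−Y²)² L_X² + 2(X−Y²) L_Y² + 4Y(X−Y²) L_X L_Y + 4X L_X L + 2Y L_Y L − L². -/

import Mathlib

/-- The TT̄-deformed Lagrangian of the CP^{N-1} model as a function of the
stress-tensor invariants `X`, `Y` and the flow parameter `γ`. -/
noncomputable def deformedLagrangian (X Y γ : ℝ) : ℝ :=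
  (1 - Real.sqrt (1 - 2 * γ * Y + 2 * γ ^ 2 * (Y ^ 2 - X))) / (2 * γ)

/-- the closed-form deformed Lagrangian satisfies the TT̄ flow
equation `∂L/∂γ = −4(X−Y²)²L_X² + 2(X−Y²)L_Y² + 4Y(X−Y²)L_X L_Y
+ 4X L_X L + 2Y L_Y L − L²`. -/
theorem stmt_6 (X Y γ : ℝ) (hγ : 0 < γ)
    (hpos : 0 < 1 - 2 * γ * Y + 2 * γ ^ 2 * (Y ^ 2 - X)) :
    deriv (fun γ' => deformedLagrangian X Y γ') γ =
      -4 * (X - Y ^ 2) ^ 2 * (deriv (fun X' => deformedLagrangian X' Y γ) X) ^ 2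
      + 2 * (X - Y ^ 2) * (deriv (fun Y' => deformedLagrangian X Y' γ) Y) ^ 2
      + 4 * Y * (X - Y ^ 2) * (deriv (fun X' => deformedLagrangian X' Y γ) X)
          * (deriv (fun Y' => deformedLagrangian X Y' γ) Y)
      + 4 * X * (deriv (fun X' => deformedLagrangian X' Y γ) X)
          * deformedLagrangian X Y γ
      + 2 * Y * (deriv (fun Y' => deformedLagrangian X Y' γ) Y)
          * deformedLagrangian X Y γ
      - (deformedLagrangian X Y γ) ^ 2 := by
  set A : ℝ := 1 - 2 * γ * Y + 2 * γ ^ 2 * (Y ^ 2 - X) with hA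
  set s : ℝ := Real.sqrt A with hsdef
  have hs0 : 0 < s := Real.sqrt_pos.mpr hpos
  have hs2 : s ^ 2 = A := Real.sq_sqrt hpos.le
  -- derivative in X
  have hAX : HasDerivAt (fun X' : ℝ => 1 - 2 * γ * Y + 2 * γ ^ 2 * (Y ^ 2 - X'))
      (-(2 * γ ^ 2)) X := by
    have h1 : HasDerivAt (fun X' : ℝ => Y ^ 2 - X') (-1) X := by
      simpa using (hasDerivAt_id X).const_sub (Y ^ 2)
    have h2 := (h1.const_mul (2 * γ ^ 2)).const_add (1 - 2 * γ * Y)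
    exact h2.congr_deriv (by ring)
  have hsX : HasDerivAt (fun X' : ℝ =>
      Real.sqrt (1 - 2 * γ * Y + 2 * γ ^ 2 * (Y ^ 2 - X')))
      (1 / (2 * s) * (-(2 * γ ^ 2))) X := by
    have := (Real.hasDerivAt_sqrt hpos.ne').comp X hAX
    simpa [hsdef, hA, Function.comp_def] using this
  have hLX : HasDerivAt (fun X' : ℝ => deformedLagrangian X' Y γ) (γ / (2 * s)) X := by
    have h := (hsX.const_sub 1).div_const (2 * γ)
    have : (-(1 / (2 * s) * (-(2 * γ ^ 2)))) / (2 * γ) = γ / (2 * s) := by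
      field_simp
    rw [this] at h
    exact h
  -- derivative in Y
  have hAY : HasDerivAt (fun Y' : ℝ => 1 - 2 * γ * Y' + 2 * γ ^ 2 * (Y' ^ 2 - X))
      (-(2 * γ) + 4 * γ ^ 2 * Y) Y := by
    have h1 : HasDerivAt (fun Y' : ℝ => Y' ^ 2 - X) (2 * Y) Y := by
      simpa using ((hasDerivAt_pow 2 Y).sub_const X)
    have h2 : HasDerivAt (fun Y' : ℝ => 1 - 2 * γ * Y') (-(2 * γ)) Y := by
      simpa using ((hasDerivAt_id Y).const_mul (2 * γ)).const_sub 1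
    have h3 := h2.add (h1.const_mul (2 * γ ^ 2))
    exact h3.congr_deriv (by ring)
  have hsY : HasDerivAt (fun Y' : ℝ =>
      Real.sqrt (1 - 2 * γ * Y' + 2 * γ ^ 2 * (Y' ^ 2 - X)))
      (1 / (2 * s) * (-(2 * γ) + 4 * γ ^ 2 * Y)) Y := by
    have := (Real.hasDerivAt_sqrt hpos.ne').comp Y hAY
    simpa [hsdef, hA, Function.comp_def] using this
  have hLY : HasDerivAt (fun Y' : ℝ => deformedLagrangian X Y' γ)
      ((1 - 2 * γ * Y) / (2 * s)) Y := by
    have h := (hsY.const_sub 1).div_const (2 * γ)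
    have : (-(1 / (2 * s) * (-(2 * γ) + 4 * γ ^ 2 * Y))) / (2 * γ)
        = (1 - 2 * γ * Y) / (2 * s) := by
      field_simp
      ring
    rw [this] at h
    exact h
  -- derivative in γ
  have hAg : HasDerivAt (fun γ' : ℝ => 1 - 2 * γ' * Y + 2 * γ' ^ 2 * (Y ^ 2 - X))
      (-(2 * Y) + 4 * γ * (Y ^ 2 - X)) γ := by
    have h1 : HasDerivAt (fun γ' : ℝ => 1 - 2 * γ' * Y) (-(2 * Y)) γ := by
      have := ((hasDerivAt_id γ).const_mul 2).mul_const Y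
      have h := this.const_sub 1
      exact h.congr_deriv (by ring)
    have h2 : HasDerivAt (fun γ' : ℝ => 2 * γ' ^ 2 * (Y ^ 2 - X))
        (4 * γ * (Y ^ 2 - X)) γ := by
      have := ((hasDerivAt_pow 2 γ).const_mul 2).mul_const (Y ^ 2 - X)
      exact this.congr_deriv (by ring)
    exact h1.add h2
  have hsg : HasDerivAt (fun γ' : ℝ =>
      Real.sqrt (1 - 2 * γ' * Y + 2 * γ' ^ 2 * (Y ^ 2 - X)))
      (1 / (2 * s) * (-(2 * Y) + 4 * γ * (Y ^ 2 - X))) γ := by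
    have := (Real.hasDerivAt_sqrt hpos.ne').comp γ hAg
    simpa [hsdef, hA, Function.comp_def] using this
  have hLg : HasDerivAt (fun γ' : ℝ => deformedLagrangian X Y γ')
      ((-(1 / (2 * s) * (-(2 * Y) + 4 * γ * (Y ^ 2 - X))) * (2 * γ)
        - (1 - s) * 2) / (2 * γ) ^ 2) γ := by
    have hnum : HasDerivAt (fun γ' : ℝ =>
        1 - Real.sqrt (1 - 2 * γ' * Y + 2 * γ' ^ 2 * (Y ^ 2 - X)))
        (-(1 / (2 * s) * (-(2 * Y) + 4 * γ * (Y ^ 2 - X)))) γ := hsg.const_sub 1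
    have hden : HasDerivAt (fun γ' : ℝ => 2 * γ') 2 γ := by
      simpa using (hasDerivAt_id γ).const_mul 2
    have := hnum.div hden (by positivity)
    simpa [deformedLagrangian, hsdef, hA, Pi.div_def] using this
  rw [hLg.deriv, hLX.deriv, hLY.deriv]
  have hLval : deformedLagrangian X Y γ = (1 - s) / (2 * γ) := by
    simp [deformedLagrangian, hsdef, hA]
  rw [hLval]
  have hsne : s ≠ 0 := hs0.ne'
  have hγne : γ ≠ 0 := hγ.ne'
  have hs2' : s ^ 2 = 1 - 2 * γ * Y + 2 * γ ^ 2 * (Y ^ 2 - X) := hs2.trans hA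
  field_simp
  linear_combination (s ^ 2 + 2 * γ ^ 2 * (X - Y ^ 2)) * hs2'
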